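/- arXiv:2210.05238 — 2 statements merged into one kernel-verified Lean document; each statement's English description precedes it below -/
import Mathlib

section
/- For every integer s ≥ 1, any binary linear code of length 31s + 2, dimension 5, and minimum distance 16s has hull dimension at least 1; in particular no binary [31s+2, 5, 16s] LCD code exists. -/
open Matrix

/-- The dual code of a binary code `C`: all vectors orthogonal to every codeword. -/
def dualCode {ι : Type*} [Fintype ι] (C : Submodule (ZMod 2) (ι → ZMod 2)) :
    Submodule (ZMod 2) (ι → ZMod 2) where
  carrier := {x | ∀ y ∈ C, x ⬝ᵥ y = 0}
  add_mem' := by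
    intro a b ha hb y hy
    simp [add_dotProduct, ha y hy, hb y hy]
  zero_mem' := by
    intro y hy
    simp
  smul_mem' := by
    intro c a ha y hy
    simp [smul_dotProduct, ha y hy]

/-- The hull of a binary code: `C ∩ C⊥`. -/
def hull {ι : Type*} [Fintype ι] (C : Submodule (ZMod 2) (ι → ZMod 2)) :
    Submodule (ZMod 2) (ι → ZMod 2) := C ⊓ dualCode C

/-- The hull dimension of a binary code. -/
noncomputable def hullDim {ι : Type*} [Fintype ι] (C : Submodule (ZMod 2) (ι → ZMod 2)) : ℕ :=
  Module.finrank (ZMod 2) (hull C)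

/-- A binary code is LCD if its hull is trivial. -/
def IsLCD {ι : Type*} [Fintype ι] (C : Submodule (ZMod 2) (ι → ZMod 2)) : Prop :=
  hull C = ⊥

/-- `G` is a generator matrix of `C`: its rows are linearly independent and span `C`. -/
def IsGenMat {κ ι : Type*} [Fintype ι] (G : Matrix κ ι (ZMod 2))
    (C : Submodule (ZMod 2) (ι → ZMod 2)) : Prop :=
  LinearIndependent (ZMod 2) (fun i => G i) ∧
    Submodule.span (ZMod 2) (Set.range fun i => G i) = C

/-- `C` has minimum distance `d`. -/
def MinDist {ι : Type*} [Fintype ι] [DecidableEq ι] (C : Submodule (ZMod 2) (ι → ZMod 2))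
    (d : ℕ) : Prop :=
  (∀ x ∈ C, x ≠ 0 → d ≤ hammingNorm x) ∧ ∃ x ∈ C, x ≠ 0 ∧ hammingNorm x = d

/-- Index type for the columns of the simplex generator matrix: nonzero vectors of `F₂^k`. -/
abbrev SimplexIdx (k : ℕ) := {v : Fin k → ZMod 2 // v ≠ 0}

/-- Generator matrix of the simplex code: columns are all nonzero vectors of `F₂^k`. -/
def simplexGen (k : ℕ) : Matrix (Fin k) (SimplexIdx k) (ZMod 2) :=
  Matrix.of fun i v => v.1 i

/-- The simplex code of dimension `k`. -/
def simplexCode (k : ℕ) : Submodule (ZMod 2) (SimplexIdx k → ZMod 2) :=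
  Submodule.span (ZMod 2) (Set.range fun i => simplexGen k i)


section AuxNoLCD

open Finset

/-- `i^t` for `t : ZMod 4`. -/
private def ee (t : ZMod 4) : GaussianInt := Zsqrtd.sqrtd ^ t.val

/-- `(-1)^c` for `c : ZMod 2`. -/
private def sg (c : ZMod 2) : GaussianInt := (-1) ^ c.val

private lemma ee_add (u v : ZMod 4) : ee (u + v) = ee u * ee v := by revert u v; decide

private lemma ee_neg_re (u : ZMod 4) : (ee (-u)).re = (ee u).re := by revert u; decide

private lemma ee_neg_im (u : ZMod 4) : (ee (-u)).im = -(ee u).im := by revert u; decide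

private lemma sg_one_add (c : ZMod 2) : sg (1 + c) = - sg c := by revert c; decide

private lemma ee_two_natCast (k : ℕ) : ee (2 * (k : ZMod 4)) = sg ((k : ZMod 2)) := by
  obtain ⟨m, rfl⟩ | ⟨m, rfl⟩ := Nat.even_or_odd k
  · have h4 : (2 * ((m + m : ℕ) : ZMod 4)) = 0 := by
      push_cast
      have h : ((4 : ℕ) : ZMod 4) = 0 := by decide
      push_cast at h
      linear_combination (m : ZMod 4) * h
    have h2 : (((m + m : ℕ)) : ZMod 2) = 0 := by
      push_cast
      have h : ((2 : ℕ) : ZMod 2) = 0 := by decide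
      push_cast at h
      linear_combination (m : ZMod 2) * h
    rw [h4, h2]; decide
  · have h4 : (2 * ((2 * m + 1 : ℕ) : ZMod 4)) = 2 := by
      push_cast
      have h : ((4 : ℕ) : ZMod 4) = 0 := by decide
      push_cast at h
      linear_combination (m : ZMod 4) * h
    have h2 : (((2 * m + 1 : ℕ)) : ZMod 2) = 1 := by
      push_cast
      have h : ((2 : ℕ) : ZMod 2) = 0 := by decide
      push_cast at h
      linear_combination (m : ZMod 2) * h
    rw [h4, h2]; decide

/-- real part as an additive hom -/
private def reHom : GaussianInt →+ ℤ :=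
  { toFun := Zsqrtd.re, map_zero' := rfl, map_add' := fun _ _ => rfl }

private def imHom : GaussianInt →+ ℤ :=
  { toFun := Zsqrtd.im, map_zero' := rfl, map_add' := fun _ _ => rfl }

private lemma sum_zmod4 {M : Type*} [AddCommMonoid M] (f : ZMod 4 → M) :
    ∑ j : ZMod 4, f j = f 0 + (f 1 + (f 2 + f 3)) := by
  have h : (Finset.univ : Finset (ZMod 4)) = {0, 1, 2, 3} := by decide
  rw [h, Finset.sum_insert (by decide), Finset.sum_insert (by decide),
    Finset.sum_insert (by decide), Finset.sum_singleton]

private lemma zmod2_ne_zero {a : ZMod 2} (h : a ≠ 0) : a = 1 := by revert h; revert a; decide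

/-- overlap count of supports -/
private def ovl {ι : Type*} [Fintype ι] (x y : ι → ZMod 2) : ℕ :=
  (Finset.univ.filter fun i => x i = 1 ∧ y i = 1).card

private lemma hammingNorm_eq_card {ι : Type*} [Fintype ι] (x : ι → ZMod 2) :
    hammingNorm x = (Finset.univ.filter fun i => x i ≠ 0).card := rfl

private lemma norm_add_eq {ι : Type*} [Fintype ι] (x y : ι → ZMod 2) :
    hammingNorm x + hammingNorm y = hammingNorm (x + y) + 2 * ovl x y := by
  have h : ∀ a b : ZMod 2, ((if a ≠ 0 then 1 else 0) + (if b ≠ 0 then 1 else 0) : ℕ)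
      = (if a + b ≠ 0 then 1 else 0) + 2 * (if a = 1 ∧ b = 1 then 1 else 0) := by decide
  simp only [hammingNorm_eq_card, ovl, Finset.card_filter]
  rw [← Finset.sum_add_distrib, Finset.mul_sum, ← Finset.sum_add_distrib]
  refine Finset.sum_congr rfl fun i _ => ?_
  simpa using h (x i) (y i)

private lemma dot_eq_ovl {ι : Type*} [Fintype ι] (x y : ι → ZMod 2) :
    x ⬝ᵥ y = ((ovl x y : ℕ) : ZMod 2) := by
  have h : ∀ a b : ZMod 2, a * b = if a = 1 ∧ b = 1 then 1 else 0 := by decide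
  simp only [dotProduct, ovl, Finset.card_filter]
  push_cast
  exact Finset.sum_congr rfl fun i _ => by rw [h]

private lemma ovl_self {ι : Type*} [Fintype ι] (x : ι → ZMod 2) : ovl x x = hammingNorm x := by
  rw [ovl, hammingNorm_eq_card]
  apply congrArg
  apply Finset.filter_congr
  intro i _
  constructor
  · rintro ⟨h, -⟩; simp [h]
  · intro h; exact ⟨zmod2_ne_zero h, zmod2_ne_zero h⟩

/-- pairing: an additive map to `ZMod 2` hitting `1` has fibers of equal size. -/
private lemma half_card {M : Type*} [AddCommGroup M] [Fintype M] [DecidableEq M] (f : M → ZMod 2)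
    (hf : ∀ a b, f (a + b) = f a + f b) (h2 : ∀ a : M, a + a = 0)
    {x0 : M} (hx0 : f x0 = 1) :
    2 * (Finset.univ.filter fun x => f x = 1).card = Fintype.card M := by
  classical
  have key : ∀ a : ZMod 2, a ≠ 1 ↔ a = 0 := by decide
  have hbij : (Finset.univ.filter fun x => f x = 1).card
      = (Finset.univ.filter fun x => ¬ (f x = 1)).card := by
    apply Finset.card_bij' (fun x _ => x + x0) (fun x _ => x + x0)
    · intro a ha
      simp only [Finset.mem_filter, Finset.mem_univ, true_and] at ha ⊢
      rw [hf, ha, hx0]; decide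
    · intro a ha
      simp only [Finset.mem_filter, Finset.mem_univ, true_and] at ha ⊢
      have ha0 : f a = 0 := (key _).mp ha
      rw [hf, ha0, hx0]; decide
    · intro a _; rw [add_assoc, h2, add_zero]
    · intro a _; rw [add_assoc, h2, add_zero]
  have htot := Finset.card_filter_add_card_filter_not
    (s := (Finset.univ : Finset M)) (fun x => f x = 1)
  rw [Finset.card_univ] at htot
  omega

/-- sum over fibers of a `ZMod 4`-valued map -/
private lemma fiber_sum {V : Type*} [Fintype V] [DecidableEq V] {M : Type*} [AddCommMonoid M]
    (g : V → ZMod 4) (f : ZMod 4 → M) :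
    ∑ x : V, f (g x) = ∑ j : ZMod 4, ((Finset.univ.filter fun x => g x = j).card) • f j := by
  rw [← Finset.sum_fiberwise Finset.univ g (fun x => f (g x))]
  refine Finset.sum_congr rfl fun j _ => ?_
  rw [Finset.sum_congr rfl (fun x hx => by
    rw [(Finset.mem_filter.mp hx).2]), Finset.sum_const]

private lemma sq_sum_32 (p q : ℤ) (h : p * p + q * q = 32) : p = 4 ∨ p = -4 := by
  have h1 : p ≤ 5 := by nlinarith
  have h2 : -5 ≤ p := by nlinarith
  have h3 : q ≤ 5 := by nlinarith
  have h4 : -5 ≤ q := by nlinarith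
  interval_cases p <;> interval_cases q <;> omega

end AuxNoLCD

/-- For every `s ≥ 1`, any binary `[31s+2, 5, 16s]` code (with no zero
coordinates) has hull dimension at least 1; in particular no such LCD code exists. -/
theorem no_lcd_31s2 (s : ℕ) (hs : 1 ≤ s)
    (C : Submodule (ZMod 2) (Fin (31 * s + 2) → ZMod 2))
    (hdim : Module.finrank (ZMod 2) C = 5)
    (hd : MinDist C (16 * s))
    (hnz : ∀ i, ∃ x ∈ C, x i ≠ 0) :
    1 ≤ hullDim C ∧ ¬ IsLCD C := by
    classical
  suffices hne : hull C ≠ ⊥ by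
    refine ⟨?_, hne⟩
    have hnt : Nontrivial (hull C) := Submodule.nontrivial_iff_ne_bot.mpr hne
    have hpos := Module.finrank_pos (R := ZMod 2) (M := hull C)
    rw [hullDim]
    omega
  intro hbot
  haveI : Fintype ↥C := Fintype.ofFinite _
  -- basic facts
  have hadd2 : ∀ c : ZMod 2, c + c = 0 := by decide
  have hcard : Fintype.card ↥C = 32 := by
    rw [Module.card_fintype (Module.finBasis (ZMod 2) ↥C), ZMod.card]
    simp [hdim]
  have h2V : ∀ a : ↥C, a + a = 0 := by
    intro a
    have h : a.1 + a.1 = 0 := funext fun i => hadd2 (a.1 i)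
    exact Subtype.ext (by simpa using h)
  -- the quadratic function
  set Q : ↥C → ZMod 4 := fun x => ((hammingNorm x.1 : ℕ) : ZMod 4) with hQdef
  have hQ0 : Q 0 = 0 := by
    simp only [hQdef]
    rw [show ((0 : ↥C) : Fin (31 * s + 2) → ZMod 2) = 0 from rfl, hammingNorm_zero]
    rfl
  -- coordinate counting
  have hcoord : ∀ i, (Finset.univ.filter fun x : ↥C => x.1 i = 1).card = 16 := by
    intro i
    obtain ⟨x, hxC, hxi⟩ := hnz i
    have h := half_card (M := ↥C) (fun x => x.1 i) (fun a b => rfl) h2V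
      (x0 := ⟨x, hxC⟩) (zmod2_ne_zero hxi)
    rw [hcard] at h
    beta_reduce at h
    omega
  have hsumW : ∑ x : ↥C, hammingNorm x.1 = 16 * (31 * s + 2) := by
    calc ∑ x : ↥C, hammingNorm x.1
        = ∑ x : ↥C, ∑ i, (if x.1 i ≠ 0 then 1 else 0) := by
          refine Finset.sum_congr rfl fun x _ => ?_
          rw [hammingNorm_eq_card, Finset.card_filter]
      _ = ∑ i, ∑ x : ↥C, (if x.1 i ≠ 0 then 1 else 0) := Finset.sum_comm
      _ = ∑ _i : Fin (31 * s + 2), 16 := by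
          refine Finset.sum_congr rfl fun i _ => ?_
          rw [← Finset.card_filter]
          rw [show (Finset.univ.filter fun x : ↥C => x.1 i ≠ 0)
              = (Finset.univ.filter fun x : ↥C => x.1 i = 1) from
            Finset.filter_congr fun x _ =>
              ⟨fun h => zmod2_ne_zero h, fun h => by rw [h]; decide⟩]
          exact hcoord i
      _ = 16 * (31 * s + 2) := by
          rw [Finset.sum_const, Finset.card_univ, Fintype.card_fin, smul_eq_mul, mul_comm]
  -- the excess weights
  set A : ↥C → ℕ := fun x => hammingNorm x.1 - 16 * s with hAdef
  have hWx : ∀ x : ↥C, x ≠ 0 → hammingNorm x.1 = 16 * s + A x := by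
    intro x hx
    have hx1 : x.1 ≠ 0 := fun h => hx (Subtype.ext h)
    have hge := hd.1 x.1 x.2 hx1
    simp only [hAdef]
    omega
  have herase : ∑ x ∈ Finset.univ.erase (0 : ↥C), A x = 32 := by
    have h0 : hammingNorm ((0 : ↥C) : Fin (31 * s + 2) → ZMod 2) = 0 := by
      rw [show ((0 : ↥C) : Fin (31 * s + 2) → ZMod 2) = 0 from rfl, hammingNorm_zero]
    have h1 : ∑ x ∈ Finset.univ.erase (0 : ↥C), hammingNorm x.1 = 16 * (31 * s + 2) := by
      rw [Finset.sum_erase (f := fun x : ↥C => hammingNorm x.1) Finset.univ h0]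
      exact hsumW
    rw [Finset.sum_congr rfl (fun x hx => hWx x (Finset.mem_erase.mp hx).1),
      Finset.sum_add_distrib, Finset.sum_const,
      Finset.card_erase_of_mem (Finset.mem_univ _), Finset.card_univ, hcard,
      smul_eq_mul] at h1
    omega
  have hQle : ∑ x : ↥C, (Q x).val ≤ 32 := by
    have h0 : (Q (0 : ↥C)).val = 0 := by rw [hQ0]; rfl
    rw [← Finset.sum_erase (f := fun x : ↥C => (Q x).val) Finset.univ h0]
    calc ∑ x ∈ Finset.univ.erase (0 : ↥C), (Q x).val
        ≤ ∑ x ∈ Finset.univ.erase (0 : ↥C), A x := by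
          refine Finset.sum_le_sum fun x hx => ?_
          have hW := hWx x (Finset.mem_erase.mp hx).1
          have hv : (Q x).val = hammingNorm x.1 % 4 := ZMod.val_natCast _ _
          omega
      _ = 32 := herase
  -- the inner character sum
  have hinner : ∀ z : ↥C, ∑ y : ↥C, sg (z.1 ⬝ᵥ y.1)
      = if z = (0 : ↥C) then ((32 : ℕ) : GaussianInt) else 0 := by
    intro z
    by_cases hz : z = 0
    · subst hz
      rw [if_pos rfl]
      have h1 : ∀ y : ↥C, sg (((0 : ↥C) : Fin (31 * s + 2) → ZMod 2) ⬝ᵥ y.1) = 1 := by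
        intro y
        rw [show ((0 : ↥C) : Fin (31 * s + 2) → ZMod 2) = 0 from rfl, zero_dotProduct]
        decide
      rw [Finset.sum_congr rfl fun y _ => h1 y, Finset.sum_const, Finset.card_univ, hcard]
      simp
    · rw [if_neg hz]
      have hz1 : z.1 ≠ 0 := fun h => hz (Subtype.ext h)
      have hex : ∃ y : ↥C, z.1 ⬝ᵥ y.1 = 1 := by
        by_contra hno
        push_neg at hno
        have hdual : z.1 ∈ dualCode C := by
          show ∀ y ∈ C, z.1 ⬝ᵥ y = 0
          intro y hy
          have h := hno ⟨y, hy⟩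
          by_contra h0
          exact h (zmod2_ne_zero h0)
        have hmem : z.1 ∈ hull C := ⟨z.2, hdual⟩
        rw [hbot] at hmem
        exact hz1 (by simpa using hmem)
      obtain ⟨y0, hy0⟩ := hex
      have hre : ∑ y : ↥C, sg (z.1 ⬝ᵥ y.1) = ∑ y : ↥C, sg (z.1 ⬝ᵥ ((y0 + y : ↥C) : _)) :=
        (Fintype.sum_equiv (Equiv.addLeft y0)
          (fun y => sg (z.1 ⬝ᵥ ((y0 + y : ↥C) : _))) _ (fun y => rfl)).symm
      have hterm : ∀ y : ↥C, sg (z.1 ⬝ᵥ ((y0 + y : ↥C) : _)) = - sg (z.1 ⬝ᵥ y.1) := by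
        intro y
        have hco : ((y0 + y : ↥C) : Fin (31 * s + 2) → ZMod 2) = y0.1 + y.1 := rfl
        rw [hco, dotProduct_add, hy0, sg_one_add]
      have h1 : ∑ y : ↥C, sg (z.1 ⬝ᵥ ((y0 + y : ↥C) : _)) = - ∑ y : ↥C, sg (z.1 ⬝ᵥ y.1) := by
        rw [Finset.sum_congr rfl fun y _ => hterm y, Finset.sum_neg_distrib]
      have hTT : (∑ y : ↥C, sg (z.1 ⬝ᵥ y.1)) = - ∑ y : ↥C, sg (z.1 ⬝ᵥ y.1) :=
        hre.trans h1
      have hre0 := congrArg Zsqrtd.re hTT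
      have him0 := congrArg Zsqrtd.im hTT
      rw [Zsqrtd.re_neg] at hre0
      rw [Zsqrtd.im_neg] at him0
      rw [Zsqrtd.ext_iff]
      constructor
      · rw [Zsqrtd.re_zero]; omega
      · rw [Zsqrtd.im_zero]; omega
  -- the Gauss sum identity
  set G : GaussianInt := ∑ x : ↥C, ee (Q x) with hGdef
  set H : GaussianInt := ∑ x : ↥C, ee (-(Q x)) with hHdef
  have hGH : G * H = ((32 : ℕ) : GaussianInt) := by
    calc G * H = ∑ x : ↥C, ∑ y : ↥C, ee (Q x) * ee (-(Q y)) :=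
          Finset.sum_mul_sum _ _ _ _
      _ = ∑ y : ↥C, ∑ x : ↥C, ee (Q x) * ee (-(Q y)) := Finset.sum_comm
      _ = ∑ y : ↥C, ∑ z : ↥C, ee (Q (y + z)) * ee (-(Q y)) := by
          refine Finset.sum_congr rfl fun y _ => ?_
          exact (Fintype.sum_equiv (Equiv.addLeft y)
            (fun z => ee (Q (y + z)) * ee (-(Q y))) _ (fun z => rfl)).symm
      _ = ∑ y : ↥C, ∑ z : ↥C, ee (Q z) * sg (z.1 ⬝ᵥ y.1) := by
          refine Finset.sum_congr rfl fun y _ => Finset.sum_congr rfl fun z _ => ?_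
          have hco : ((y + z : ↥C) : Fin (31 * s + 2) → ZMod 2) = y.1 + z.1 := rfl
          have hE : Q y + Q z = Q (y + z) + 2 * ((ovl y.1 z.1 : ℕ) : ZMod 4) := by
            have hn := congrArg (fun m : ℕ => (m : ZMod 4)) (norm_add_eq y.1 z.1)
            push_cast at hn
            simp only [hQdef, hco]
            push_cast
            linear_combination hn
          have h4 : (4 : ZMod 4) * ((ovl y.1 z.1 : ℕ) : ZMod 4) = 0 := by
            rw [show (4 : ZMod 4) = 0 from by decide, zero_mul]
          have h1 : Q (y + z) + -(Q y) = Q z + 2 * ((ovl y.1 z.1 : ℕ) : ZMod 4) := by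
            linear_combination -hE - h4
          calc ee (Q (y + z)) * ee (-(Q y)) = ee (Q (y + z) + -(Q y)) := (ee_add _ _).symm
            _ = ee (Q z + 2 * ((ovl y.1 z.1 : ℕ) : ZMod 4)) := by rw [h1]
            _ = ee (Q z) * ee (2 * ((ovl y.1 z.1 : ℕ) : ZMod 4)) := ee_add _ _
            _ = ee (Q z) * sg ((ovl y.1 z.1 : ℕ) : ZMod 2) := by rw [ee_two_natCast]
            _ = ee (Q z) * sg (z.1 ⬝ᵥ y.1) := by
                rw [← dot_eq_ovl, dotProduct_comm]
      _ = ∑ z : ↥C, ee (Q z) * ∑ y : ↥C, sg (z.1 ⬝ᵥ y.1) := by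
          rw [Finset.sum_comm]
          exact Finset.sum_congr rfl fun z _ => (Finset.mul_sum _ _ _).symm
      _ = ∑ z : ↥C, ee (Q z) * (if z = (0 : ↥C) then ((32 : ℕ) : GaussianInt) else 0) :=
          Finset.sum_congr rfl fun z _ => by rw [hinner z]
      _ = ((32 : ℕ) : GaussianInt) := by
          simp only [mul_ite, mul_zero]
          rw [Finset.sum_ite_eq' Finset.univ (0 : ↥C)
            (fun z => ee (Q z) * ((32 : ℕ) : GaussianInt))]
          rw [if_pos (Finset.mem_univ _), hQ0, show ee 0 = 1 from rfl, one_mul]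
  -- extract the component identity
  have hHre : H.re = G.re := by
    have h1 : H.re = ∑ x : ↥C, (ee (-(Q x))).re := map_sum reHom _ _
    have h2 : G.re = ∑ x : ↥C, (ee (Q x)).re := map_sum reHom _ _
    rw [h1, h2]
    exact Finset.sum_congr rfl fun x _ => ee_neg_re _
  have hHim : H.im = - G.im := by
    have h1 : H.im = ∑ x : ↥C, (ee (-(Q x))).im := map_sum imHom _ _
    have h2 : G.im = ∑ x : ↥C, (ee (Q x)).im := map_sum imHom _ _
    rw [h1, h2, ← Finset.sum_neg_distrib]
    exact Finset.sum_congr rfl fun x _ => ee_neg_im _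
  have hab : G.re * G.re + G.im * G.im = 32 := by
    have h := congrArg Zsqrtd.re hGH
    rw [Zsqrtd.re_mul, hHre, hHim, Zsqrtd.re_natCast] at h
    push_cast at h
    linear_combination h
  -- fiber counts
  have hGre : G.re = (((Finset.univ.filter fun x : ↥C => Q x = 0).card : ℤ)
      - ((Finset.univ.filter fun x : ↥C => Q x = 2).card : ℤ)) := by
    have h2 : G.re = ∑ x : ↥C, (ee (Q x)).re := map_sum reHom _ _
    rw [h2, fiber_sum Q (fun j => (ee j).re), sum_zmod4]
    rw [show ((ee 0).re) = 1 from by decide, show ((ee 1).re) = 0 from by decide,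
      show ((ee 2).re) = -1 from by decide, show ((ee 3).re) = 0 from by decide]
    simp only [nsmul_eq_mul, mul_one, mul_zero, mul_neg]
    push_cast
    ring
  have hGim : G.im = (((Finset.univ.filter fun x : ↥C => Q x = 1).card : ℤ)
      - ((Finset.univ.filter fun x : ↥C => Q x = 3).card : ℤ)) := by
    have h2 : G.im = ∑ x : ↥C, (ee (Q x)).im := map_sum imHom _ _
    rw [h2, fiber_sum Q (fun j => (ee j).im), sum_zmod4]
    rw [show ((ee 0).im) = 0 from by decide, show ((ee 1).im) = 1 from by decide,
      show ((ee 2).im) = 0 from by decide, show ((ee 3).im) = -1 from by decide]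
    simp only [nsmul_eq_mul, mul_one, mul_zero, mul_neg]
    push_cast
    ring
  have hTot : (Finset.univ.filter fun x : ↥C => Q x = 0).card
      + (Finset.univ.filter fun x : ↥C => Q x = 1).card
      + (Finset.univ.filter fun x : ↥C => Q x = 2).card
      + (Finset.univ.filter fun x : ↥C => Q x = 3).card = 32 := by
    have h := fiber_sum (V := ↥C) Q (fun _ => (1 : ℕ))
    rw [sum_zmod4, Finset.sum_const, Finset.card_univ, hcard] at h
    simp only [smul_eq_mul, mul_one] at h
    omega
  have hS : ∑ x : ↥C, (Q x).val
      = (Finset.univ.filter fun x : ↥C => Q x = 1).card * 1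
      + (Finset.univ.filter fun x : ↥C => Q x = 2).card * 2
      + (Finset.univ.filter fun x : ↥C => Q x = 3).card * 3 := by
    have h := fiber_sum (V := ↥C) Q (fun j => j.val)
    rw [sum_zmod4] at h
    rw [h, show ((0 : ZMod 4)).val = 0 from rfl, show ((1 : ZMod 4)).val = 1 from rfl,
      show ((2 : ZMod 4)).val = 2 from rfl, show ((3 : ZMod 4)).val = 3 from rfl]
    simp only [smul_eq_mul]
    ring
  -- diag parity
  have hpar13 : (Finset.univ.filter fun x : ↥C => Q x = 1).card
        + (Finset.univ.filter fun x : ↥C => Q x = 3).card = 0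
      ∨ (Finset.univ.filter fun x : ↥C => Q x = 1).card
        + (Finset.univ.filter fun x : ↥C => Q x = 3).card = 16 := by
    have hψQ : ∀ x : ↥C, (Q x = 1 ∨ Q x = 3) ↔ (x.1 ⬝ᵥ x.1 = 1) := by
      intro x
      have hv : x.1 ⬝ᵥ x.1 = ((hammingNorm x.1 : ℕ) : ZMod 2) := by
        rw [dot_eq_ovl, ovl_self]
      have e4 : ∀ u : ZMod 4, (u = 1 ∨ u = 3) ↔ (u.val = 1 ∨ u.val = 3) := by decide
      have e2 : ∀ u : ZMod 2, u = 1 ↔ u.val = 1 := by decide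
      rw [hv, e4, e2]
      simp only [hQdef, ZMod.val_natCast]
      omega
    have hdisj : Disjoint (Finset.univ.filter fun x : ↥C => Q x = 1)
        (Finset.univ.filter fun x : ↥C => Q x = 3) := by
      rw [Finset.disjoint_left]
      intro x hx1 hx3
      have h1 := (Finset.mem_filter.mp hx1).2
      have h3 := (Finset.mem_filter.mp hx3).2
      rw [h1] at h3
      exact absurd h3 (by decide)
    have hunion : (Finset.univ.filter fun x : ↥C => Q x = 1 ∨ Q x = 3).card
        = (Finset.univ.filter fun x : ↥C => Q x = 1).card
          + (Finset.univ.filter fun x : ↥C => Q x = 3).card := by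
      rw [Finset.filter_or, Finset.card_union_of_disjoint hdisj]
    have hfe : (Finset.univ.filter fun x : ↥C => Q x = 1 ∨ Q x = 3)
        = (Finset.univ.filter fun x : ↥C => x.1 ⬝ᵥ x.1 = 1) :=
      Finset.filter_congr fun x _ => hψQ x
    by_cases hex : ∃ x0 : ↥C, x0.1 ⬝ᵥ x0.1 = 1
    · obtain ⟨x0, hx0⟩ := hex
      right
      have haddψ : ∀ a b : ↥C, (a + b).1 ⬝ᵥ (a + b).1 = a.1 ⬝ᵥ a.1 + b.1 ⬝ᵥ b.1 := by
        intro a b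
        have hco : ((a + b : ↥C) : Fin (31 * s + 2) → ZMod 2) = a.1 + b.1 := rfl
        rw [hco, add_dotProduct, dotProduct_add, dotProduct_add,
          dotProduct_comm b.1 a.1]
        linear_combination hadd2 (a.1 ⬝ᵥ b.1)
      have hh := half_card (M := ↥C) (fun x => x.1 ⬝ᵥ x.1) haddψ h2V hx0
      rw [hcard] at hh
      beta_reduce at hh
      rw [← hunion, hfe]
      omega
    · left
      push_neg at hex
      have hempty : (Finset.univ.filter fun x : ↥C => x.1 ⬝ᵥ x.1 = 1) = ∅ :=
        Finset.filter_eq_empty_iff.mpr fun x _ => hex x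
      rw [← hunion, hfe, hempty]
      rfl
  -- final contradiction
  have ha4 : G.re = 4 ∨ G.re = -4 := sq_sum_32 _ _ hab
  have hb4 : G.im = 4 ∨ G.im = -4 := sq_sum_32 G.im G.re (by linear_combination hab)
  rw [hGre] at ha4
  rw [hGim] at hb4
  rw [hS] at hQle
  omega
end

section
/- For k ≥ 2, over ℤ we have P_k·(J_k − 2Q_k) = 2^{k−1}·I, where Q_k = J_k − P_k and J_k is the all-ones matrix of size 2^k − 1. -/
open Matrix Finset

/-- The matrix `P_k` over `ℤ`: its rows are the `2^k - 1` nonzero codewords of the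
simplex code `S_k`, viewed with 0-1 integer entries. -/
def PmatZ (k : ℕ) : Matrix (SimplexIdx k) (SimplexIdx k) ℤ :=
  Matrix.of fun v w => if v.1 ⬝ᵥ w.1 = (1 : ZMod 2) then 1 else 0

/-- The all-ones integer matrix `J_k`. -/
def JmatZ (k : ℕ) : Matrix (SimplexIdx k) (SimplexIdx k) ℤ :=
  Matrix.of fun _ _ => 1

/-- `Q_k = J_k - P_k` over `ℤ`. -/
def QmatZ (k : ℕ) : Matrix (SimplexIdx k) (SimplexIdx k) ℤ :=
  JmatZ k - PmatZ k


lemma zmod2_cases (a : ZMod 2) : a = 0 ∨ a = 1 := by revert a; decide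

lemma card_dot_one {k : ℕ} (v : Fin k → ZMod 2) (hv : v ≠ 0) :
    #(univ.filter fun x : Fin k → ZMod 2 => v ⬝ᵥ x = 1) = 2 ^ (k - 1) := by
  obtain ⟨i, hi⟩ : ∃ i, v i ≠ 0 := by
    by_contra h; push_neg at h; exact hv (funext h)
  have hk1 : 1 ≤ k := i.pos
  have hvi : v i = 1 := (zmod2_cases (v i)).resolve_left hi
  set e : Fin k → ZMod 2 := Pi.single i 1 with he
  have hdote : v ⬝ᵥ e = 1 := by simp [he, hvi]
  have hee : ∀ x : Fin k → ZMod 2, x + e + e = x := by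
    intro x; funext j; simp only [Pi.add_apply]; rw [add_assoc, CharTwo.add_self_eq_zero, add_zero]
  have hcards : #(univ.filter fun x : Fin k → ZMod 2 => v ⬝ᵥ x = 1)
      = #(univ.filter fun x : Fin k → ZMod 2 => ¬ (v ⬝ᵥ x = 1)) := by
    apply Finset.card_nbij' (fun x => x + e) (fun x => x + e)
    · intro a ha
      simp only [mem_coe, mem_filter, mem_univ, true_and, dotProduct_add, hdote] at *
      rw [ha]; decide
    · intro a ha
      simp only [mem_coe, mem_filter, mem_univ, true_and, dotProduct_add, hdote] at *
      rcases zmod2_cases (v ⬝ᵥ a) with h | h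
      · rw [h]; decide
      · exact absurd h ha
    · intro a _; exact hee a
    · intro a _; exact hee a
  have htot := Finset.card_filter_add_card_filter_not
    (s := (univ : Finset (Fin k → ZMod 2))) (fun x => v ⬝ᵥ x = 1)
  have hcard : Fintype.card (Fin k → ZMod 2) = 2 ^ k := by
    simp [Fintype.card_fun]
  rw [Finset.card_univ, hcard, ← hcards] at htot
  have h2 : 2 ^ k = 2 * 2 ^ (k - 1) := by
    conv_lhs => rw [show k = (k-1) + 1 by omega]
    ring
  omega

lemma filter_split {α : Type*} [Fintype α] [DecidableEq α] (p q : α → Prop)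
    [DecidablePred p] [DecidablePred q] :
    #(univ.filter fun x => p x ∧ q x) + #(univ.filter fun x => p x ∧ ¬ q x)
      = #(univ.filter p) := by
  rw [← Finset.filter_filter, ← Finset.filter_filter,
    Finset.card_filter_add_card_filter_not]

lemma card_dot_pair {k : ℕ} (v w : Fin k → ZMod 2) (hv : v ≠ 0) (hw : w ≠ 0)
    (hvw : v ≠ w) (hk : 2 ≤ k) :
    #(univ.filter fun x : Fin k → ZMod 2 => v ⬝ᵥ x = 1 ∧ w ⬝ᵥ x = 1) = 2 ^ (k - 2) := by
  have hsum : v + w ≠ 0 := by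
    intro h
    apply hvw
    funext j
    have hj := congrFun h j
    have : ∀ a b : ZMod 2, a + b = 0 → a = b := by decide
    exact this _ _ hj
  have h1 := filter_split (fun x : Fin k → ZMod 2 => v ⬝ᵥ x = 1) (fun x => w ⬝ᵥ x = 1)
  have h2 := filter_split (fun x : Fin k → ZMod 2 => w ⬝ᵥ x = 1) (fun x => v ⬝ᵥ x = 1)
  have h3 := filter_split (fun x : Fin k → ZMod 2 => (v + w) ⬝ᵥ x = 1) (fun x => v ⬝ᵥ x = 1)
  rw [card_dot_one v hv] at h1
  rw [card_dot_one w hw] at h2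
  rw [card_dot_one _ hsum] at h3
  have e1 : (univ.filter fun x : Fin k → ZMod 2 => (v + w) ⬝ᵥ x = 1 ∧ v ⬝ᵥ x = 1)
      = univ.filter fun x => v ⬝ᵥ x = 1 ∧ ¬ w ⬝ᵥ x = 1 := by
    apply Finset.filter_congr
    intro x _
    rw [add_dotProduct]
    rcases zmod2_cases (v ⬝ᵥ x) with h | h <;> rcases zmod2_cases (w ⬝ᵥ x) with h' | h' <;>
      simp [h, h']
  have e2 : (univ.filter fun x : Fin k → ZMod 2 => (v + w) ⬝ᵥ x = 1 ∧ ¬ v ⬝ᵥ x = 1)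
      = univ.filter fun x => w ⬝ᵥ x = 1 ∧ ¬ v ⬝ᵥ x = 1 := by
    apply Finset.filter_congr
    intro x _
    rw [add_dotProduct]
    rcases zmod2_cases (v ⬝ᵥ x) with h | h <;> rcases zmod2_cases (w ⬝ᵥ x) with h' | h' <;>
      simp [h, h']
  have e3 : (univ.filter fun x : Fin k → ZMod 2 => w ⬝ᵥ x = 1 ∧ v ⬝ᵥ x = 1)
      = univ.filter fun x => v ⬝ᵥ x = 1 ∧ w ⬝ᵥ x = 1 := by
    apply Finset.filter_congr
    intro x _
    tauto
  rw [e1, e2] at h3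
  rw [e3] at h2
  have hpow : 2 ^ (k - 1) = 2 * 2 ^ (k - 2) := by
    conv_lhs => rw [show k - 1 = (k - 2) + 1 by omega]
    ring
  omega

lemma card_simplex_filter {k : ℕ} (p : (Fin k → ZMod 2) → Prop) [DecidablePred p]
    (hp : ∀ x, p x → x ≠ 0) :
    #(univ.filter fun x : SimplexIdx k => p x.1) = #(univ.filter p) := by
  apply Finset.card_bij (fun a _ => a.1)
  · intro a ha
    simp only [mem_filter, mem_univ, true_and] at *
    exact ha
  · intro a _ b _ h
    exact Subtype.ext h
  · intro b hb
    simp only [mem_filter, mem_univ, true_and] at hb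
    exact ⟨⟨b, hp b hb⟩, by simp [hb]⟩

/-- The integer matrix identity `P_k · (J_k - 2·Q_k) = 2^(k-1) · I`
for all `k ≥ 2`, where `Q_k = J_k - P_k` and `J_k` is the all-ones matrix. -/
theorem Pmat_mul_J_sub_two_Q {k : ℕ} (hk : 2 ≤ k) :
    PmatZ k * (JmatZ k - 2 • QmatZ k) = (2 ^ (k - 1) : ℤ) • (1 : Matrix (SimplexIdx k) (SimplexIdx k) ℤ) := by
  ext v w
  rw [Matrix.mul_apply]
  simp only [PmatZ, JmatZ, QmatZ, Matrix.sub_apply, Matrix.smul_apply, Matrix.of_apply,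
    Matrix.one_apply, smul_eq_mul]
  simp only [show ∀ x : SimplexIdx k, (x.1 ⬝ᵥ w.1 = (1 : ZMod 2)) = (w.1 ⬝ᵥ x.1 = 1) from
    fun x => by rw [dotProduct_comm]]
  have hterm : ∀ x : SimplexIdx k,
      (if v.1 ⬝ᵥ x.1 = (1 : ZMod 2) then (1 : ℤ) else 0) *
        (1 - 2 • (1 - if w.1 ⬝ᵥ x.1 = (1 : ZMod 2) then (1 : ℤ) else 0))
      = (if (v.1 ⬝ᵥ x.1 = (1 : ZMod 2) ∧ w.1 ⬝ᵥ x.1 = (1 : ZMod 2)) then (2 : ℤ) else 0)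
          - (if v.1 ⬝ᵥ x.1 = (1 : ZMod 2) then (1 : ℤ) else 0) := by
    intro x
    split_ifs with h1 h2 h3 h4 <;> simp <;> tauto
  rw [Finset.sum_congr rfl fun x _ => hterm x, Finset.sum_sub_distrib,
    Finset.sum_ite, Finset.sum_const, Finset.sum_const_zero,
    Finset.sum_ite, Finset.sum_const, Finset.sum_const_zero]
  have hc1 : #(univ.filter fun x : SimplexIdx k => v.1 ⬝ᵥ x.1 = (1 : ZMod 2)) = 2 ^ (k - 1) := by
    rw [card_simplex_filter (fun x => v.1 ⬝ᵥ x = (1 : ZMod 2))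
      (fun x hx h0 => by simp [h0] at hx)]
    exact card_dot_one v.1 v.2
  rcases eq_or_ne v w with rfl | hvw
  · have hc2 : #(univ.filter fun x : SimplexIdx k =>
        v.1 ⬝ᵥ x.1 = (1 : ZMod 2) ∧ v.1 ⬝ᵥ x.1 = (1 : ZMod 2)) = 2 ^ (k - 1) := by
      rw [Finset.filter_congr (fun x _ => and_self_iff (a := v.1 ⬝ᵥ x.1 = (1 : ZMod 2)))]
      exact hc1
    rw [hc1, hc2, if_pos rfl]
    push_cast [nsmul_eq_mul]
    have : (2 : ℤ) ^ (k - 1) = 2 ^ (k - 1) := rfl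
    ring
  · have hc2 : #(univ.filter fun x : SimplexIdx k =>
        v.1 ⬝ᵥ x.1 = (1 : ZMod 2) ∧ w.1 ⬝ᵥ x.1 = (1 : ZMod 2)) = 2 ^ (k - 2) := by
      rw [card_simplex_filter (fun x => v.1 ⬝ᵥ x = (1 : ZMod 2) ∧ w.1 ⬝ᵥ x = (1 : ZMod 2))
        (fun x hx h0 => by simp [h0] at hx)]
      exact card_dot_pair v.1 w.1 v.2 w.2 (fun h => hvw (Subtype.ext h)) hk
    rw [hc1, hc2, if_neg hvw]
    push_cast [nsmul_eq_mul]
    have hpow : (2 : ℤ) ^ (k - 1) = 2 * 2 ^ (k - 2) := by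
      rw [show k - 1 = (k - 2) + 1 by omega]; ring
    rw [hpow]; ring
end
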